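/- Consider a complex balanced chemical reaction network without boundary equilibria for the mass vector M ∈ ℝ^m_{>0}, with unique strictly positive complex balance equilibrium c∞ satisfying Q c∞ = M. Fix λ_1 > 0 and K > 0, set F(ξ) := λ_1 Σ_{i=1}^N Ψ(ξ_i; c_{i,∞}), G(ξ) := (1/2) Σ_{r=1}^R k_r c∞^{y_r} Ψ(ξ^{y_r}/c∞^{y_r} ; ξ^{y_r'}/c∞^{y_r'}), Φ := F + G on ℝ^N_{>0}, and let Φ̂ be the convexification of Φ (the pointwise supremum of all affine functions lying below Φ on ℝ^N_{>0}). With C_M := { ξ ∈ ℝ^N_{>0} : Q ξ = M and E(ξ|c∞) ≤ K }, one has λ_2 := inf { (Φ̂(ξ) − F(ξ))/E(ξ|c∞) : ξ ∈ C_M, ξ ≠ c∞ } > 0. -/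

import Mathlib

/- STATEMENT 9: For a complex balanced network without boundary equilibria for M, with
F(ξ) = λ₁ ∑ Ψ(ξ_i; c_{i,∞}), G(ξ) = ½ ∑_r k_r c∞^{y_r} Ψ(ξ^{y_r}/c∞^{y_r}; ξ^{y'_r}/c∞^{y'_r}),
Φ = F + G and Φ̂ the convexification of Φ on ℝ^N_{>0},
the infimum of (Φ̂(ξ) - F(ξ))/E(ξ|c∞) over C_M = {ξ > 0 : Qξ = M, E(ξ|c∞) ≤ K}, ξ ≠ c∞,
is strictly positive. -/

namespace Stmt9

noncomputable def cpow {N : ℕ} (c : Fin N → ℝ) (y : Fin N → ℕ) : ℝ :=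
  ∏ i, c i ^ y i

noncomputable def Psi (x y : ℝ) : ℝ := x * Real.log (x / y) - x + y

def IsComplexBalanced {N R : ℕ} (y y' : Fin R → Fin N → ℕ) (k : Fin R → ℝ)
    (z : Fin N → ℝ) : Prop :=
  ∀ yc : Fin N → ℕ,
    ∑ r ∈ Finset.univ.filter (fun r => y r = yc), k r * cpow z (y r) =
    ∑ s ∈ Finset.univ.filter (fun s => y' s = yc), k s * cpow z (y s)

noncomputable def Ent {N : ℕ} (c cinf : Fin N → ℝ) : ℝ :=
  ∑ i, (c i * Real.log (c i / cinf i) - c i + cinf i)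

/-- `F(ξ) = λ₁ ∑ᵢ Ψ(ξᵢ; c_{i,∞})`. -/
noncomputable def Ffun {N : ℕ} (lam1 : ℝ) (cinf : Fin N → ℝ) (ξ : Fin N → ℝ) : ℝ :=
  lam1 * ∑ i, Psi (ξ i) (cinf i)

/-- `G(ξ) = ½ ∑ᵣ k_r c∞^{y_r} Ψ(ξ^{y_r}/c∞^{y_r}; ξ^{y'_r}/c∞^{y'_r})`. -/
noncomputable def Gfun {N R : ℕ} (y y' : Fin R → Fin N → ℕ) (k : Fin R → ℝ)
    (cinf : Fin N → ℝ) (ξ : Fin N → ℝ) : ℝ :=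
  (1 / 2) * ∑ r, k r * cpow cinf (y r) *
    Psi (cpow ξ (y r) / cpow cinf (y r)) (cpow ξ (y' r) / cpow cinf (y' r))

/-- Convexification of `Φ` on the open positive orthant: the pointwise supremum of all
affine functions lying below `Φ` there. -/
noncomputable def convexification {N : ℕ} (Φ : (Fin N → ℝ) → ℝ) (ξ : Fin N → ℝ) : ℝ :=
  sSup {v : ℝ | ∃ (g : (Fin N → ℝ) →ₗ[ℝ] ℝ) (b : ℝ),
    (∀ z : Fin N → ℝ, (∀ i, 0 < z i) → g z + b ≤ Φ z) ∧ v = g ξ + b}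

section Helpers
open Real Filter Topology

lemma psi_ge_sq {x y : ℝ} (hx : 0 < x) (hy : 0 < y) :
    (Real.sqrt x - Real.sqrt y) ^ 2 ≤ Psi x y := by
  have hsx : Real.sqrt x ^ 2 = x := Real.sq_sqrt hx.le
  have hsy : Real.sqrt y ^ 2 = y := Real.sq_sqrt hy.le
  have hsxp : 0 < Real.sqrt x := Real.sqrt_pos.2 hx
  have hsyp : 0 < Real.sqrt y := Real.sqrt_pos.2 hy
  have hlog : Real.log (Real.sqrt y / Real.sqrt x) ≤ Real.sqrt y / Real.sqrt x - 1 :=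
    Real.log_le_sub_one_of_pos (by positivity)
  have hld : Real.log (Real.sqrt y / Real.sqrt x) =
      Real.log (Real.sqrt y) - Real.log (Real.sqrt x) :=
    Real.log_div hsyp.ne' hsxp.ne'
  have hlx : Real.log (Real.sqrt x) = Real.log x / 2 := Real.log_sqrt hx.le
  have hly : Real.log (Real.sqrt y) = Real.log y / 2 := Real.log_sqrt hy.le
  have hxy : Real.log (x / y) = Real.log x - Real.log y := Real.log_div hx.ne' hy.ne'
  have key : 2 - 2 * (Real.sqrt y / Real.sqrt x) ≤ Real.log x - Real.log y := by
    rw [hld, hlx, hly] at hlog; linarith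
  have hdiv : x * (Real.sqrt y / Real.sqrt x) = Real.sqrt x * Real.sqrt y := by
    rw [mul_div_assoc', div_eq_iff hsxp.ne']; linear_combination (-Real.sqrt y) * hsx
  have h2 : 2 * x - 2 * (Real.sqrt x * Real.sqrt y) ≤ x * (Real.log x - Real.log y) := by
    have h3 := mul_le_mul_of_nonneg_left key hx.le
    nlinarith [h3, hdiv]
  unfold Psi
  rw [hxy]
  nlinarith [hsx, hsy, h2]

lemma psi_nonneg {x y : ℝ} (hx : 0 < x) (hy : 0 < y) : 0 ≤ Psi x y :=
  le_trans (sq_nonneg _) (psi_ge_sq hx hy)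

lemma psi_le_sq {x c : ℝ} (hx : 0 < x) (hc : 0 < c) : Psi x c ≤ (x - c) ^ 2 / c := by
  have hlog : Real.log (x / c) ≤ x / c - 1 := Real.log_le_sub_one_of_pos (by positivity)
  have h3 := mul_le_mul_of_nonneg_left hlog hx.le
  unfold Psi
  rw [le_div_iff₀ hc]
  have h4 : x * Real.log (x / c) * c ≤ x * (x / c - 1) * c :=
    mul_le_mul_of_nonneg_right h3 hc.le
  have h5 : x * (x / c - 1) * c = x * x - x * c := by field_simp
  nlinarith [h4, h5]

lemma cpow_pos {N : ℕ} {z : Fin N → ℝ} (hz : ∀ i, 0 < z i) (w : Fin N → ℕ) :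
    0 < cpow z w :=
  Finset.prod_pos fun i _ => pow_pos (hz i) _

lemma cpow_nonneg {N : ℕ} {z : Fin N → ℝ} (hz : ∀ i, 0 ≤ z i) (w : Fin N → ℕ) :
    0 ≤ cpow z w :=
  Finset.prod_nonneg fun i _ => pow_nonneg (hz i) _

lemma continuous_cpow {N : ℕ} (w : Fin N → ℕ) : Continuous fun z : Fin N → ℝ => cpow z w :=
  continuous_finset_prod _ fun i _ => (continuous_apply i).pow _

lemma cpow_mul {N : ℕ} (a b : Fin N → ℝ) (w : Fin N → ℕ) :
    cpow (fun i => a i * b i) w = cpow a w * cpow b w := by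
  simp [cpow, mul_pow, Finset.prod_mul_distrib]

lemma cpow_div {N : ℕ} (a b : Fin N → ℝ) (w : Fin N → ℕ) :
    cpow (fun i => a i / b i) w = cpow a w / cpow b w := by
  simp [cpow, div_pow, Finset.prod_div_distrib]

lemma cpow_eq_exp {N : ℕ} {q : Fin N → ℝ} (hq : ∀ i, 0 < q i) (w : Fin N → ℕ) :
    cpow q w = Real.exp (∑ i, (w i : ℝ) * Real.log (q i)) := by
  rw [Real.exp_sum]
  refine Finset.prod_congr rfl fun i _ => ?_
  rw [mul_comm, Real.exp_mul, Real.exp_log (hq i)]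
  norm_cast

lemma balanced_of_rel {N R : ℕ} (y y' : Fin R → Fin N → ℕ) (k : Fin R → ℝ)
    (cinf : Fin N → ℝ) (hbal : IsComplexBalanced y y' k cinf)
    (μ : Fin N → ℝ) (hrel : ∀ r, cpow μ (y r) = cpow μ (y' r)) :
    IsComplexBalanced y y' k (fun i => μ i * cinf i) := by
  intro yc
  have hL : ∀ r ∈ Finset.univ.filter (fun r => y r = yc),
      k r * cpow (fun i => μ i * cinf i) (y r) = cpow μ yc * (k r * cpow cinf (y r)) := by
    intro r hr
    have hyr : y r = yc := (Finset.mem_filter.1 hr).2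
    rw [cpow_mul, ← hyr]; ring
  have hR : ∀ s ∈ Finset.univ.filter (fun s => y' s = yc),
      k s * cpow (fun i => μ i * cinf i) (y s) = cpow μ yc * (k s * cpow cinf (y s)) := by
    intro s hs
    have hys : y' s = yc := (Finset.mem_filter.1 hs).2
    rw [cpow_mul, hrel s, ← hys]; ring
  rw [Finset.sum_congr rfl hL, Finset.sum_congr rfl hR, ← Finset.mul_sum, ← Finset.mul_sum,
    hbal yc]

lemma tendsto_helper {f : ℝ → ℝ} {L l : ℝ} (hf : HasDerivAt f L 0) (hf0 : f 0 = 0)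
    {s d : ℕ → ℝ} (hs : Tendsto s atTop (𝓝 0))
    (hr : Tendsto (fun n => s n / d n) atTop (𝓝 l)) :
    Tendsto (fun n => f (s n) / d n) atTop (𝓝 (L * l)) := by
  set g : ℝ → ℝ := fun t => if t = 0 then L else f t / t with hg
  have hgt : ∀ t, f t = g t * t := by
    intro t
    by_cases h : t = 0
    · simp [hg, h, hf0]
    · simp [hg, h, div_mul_cancel₀ _ h]
  have hgc : Tendsto g (𝓝 0) (𝓝 L) := by
    rw [← nhdsNE_sup_pure (0 : ℝ), Filter.tendsto_sup]
    constructor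
    · have h1 : Tendsto (slope f 0) (𝓝[≠] (0:ℝ)) (𝓝 L) := hasDerivAt_iff_tendsto_slope.1 hf
      refine h1.congr' ?_
      filter_upwards [self_mem_nhdsWithin] with t ht
      simp only [slope, hg, Set.mem_compl_iff, Set.mem_singleton_iff] at *
      rw [if_neg ht]
      simp [hf0, vsub_eq_sub, div_eq_inv_mul]
    · have : g 0 = L := by simp [hg]
      rw [← this]
      exact tendsto_pure_nhds g 0
  have hm := (hgc.comp hs).mul hr
  refine hm.congr fun n => ?_
  rw [Function.comp_apply, ← mul_div_assoc, ← hgt (s n)]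

lemma sqrt_le_of_psi_le {a b Kb : ℝ} (ha : 0 < a) (hb : 0 < b) (h : Psi a b ≤ Kb) :
    Real.sqrt a ≤ Real.sqrt b + Real.sqrt Kb := by
  have h1 : (Real.sqrt a - Real.sqrt b) ^ 2 ≤ Kb := le_trans (psi_ge_sq ha hb) h
  have h2 : Real.sqrt a - Real.sqrt b ≤ Real.sqrt Kb := by
    calc Real.sqrt a - Real.sqrt b ≤ |Real.sqrt a - Real.sqrt b| := le_abs_self _
    _ = Real.sqrt ((Real.sqrt a - Real.sqrt b) ^ 2) := (Real.sqrt_sq_eq_abs _).symm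
    _ ≤ Real.sqrt Kb := Real.sqrt_le_sqrt h1
  linarith

/- ------------------ the key uniform inequality ------------------ -/

set_option maxHeartbeats 3200000 in
lemma star {N R m : ℕ}
    (y y' : Fin R → Fin N → ℕ) (k : Fin R → ℝ) (hk : ∀ r, 0 < k r)
    (Q : Matrix (Fin m) (Fin N) ℝ)
    (hQspan : ∀ v : Fin N → ℝ, (∀ r, ∑ i, ((y' r i : ℝ) - (y r i : ℝ)) * v i = 0) →
      v ∈ Submodule.span ℝ (Set.range fun j => Q j))
    (M : Fin m → ℝ)
    (cinf : Fin N → ℝ) (hcinf : ∀ i, 0 < cinf i)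
    (hbal : IsComplexBalanced y y' k cinf) (hQcinf : Q.mulVec cinf = M)
    (huniq : ∀ z : Fin N → ℝ, (∀ i, 0 < z i) → Q.mulVec z = M →
      IsComplexBalanced y y' k z → z = cinf)
    (hnobd : ∀ z : Fin N → ℝ, (∀ i, 0 ≤ z i) → (∃ i, z i = 0) → Q.mulVec z = M →
      ¬ IsComplexBalanced y y' k z)
    (lam1 : ℝ) (hlam1 : 0 < lam1) (K : ℝ) (hK : 0 < K) :
    ∃ lam2 > (0:ℝ), ∀ ξ : Fin N → ℝ, (∀ i, 0 < ξ i) → Q.mulVec ξ = M →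
      Ent ξ cinf ≤ K → ξ ≠ cinf → ∀ z : Fin N → ℝ, (∀ i, 0 < z i) →
      lam2 * Ent ξ cinf ≤ lam1 * (∑ i, Psi (z i) (ξ i)) + Gfun y y' k cinf z := by
  by_contra hcon
  push_neg at hcon
  have H : ∀ n : ℕ, ∃ ξ : Fin N → ℝ, (∀ i, 0 < ξ i) ∧ Q.mulVec ξ = M ∧
      Ent ξ cinf ≤ K ∧ ξ ≠ cinf ∧ ∃ z : Fin N → ℝ, (∀ i, 0 < z i) ∧
      lam1 * (∑ i, Psi (z i) (ξ i)) + Gfun y y' k cinf z < ((n:ℝ)+1)⁻¹ * Ent ξ cinf :=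
    fun n => hcon (((n:ℝ)+1)⁻¹) (by positivity)
  choose ξs hpos hQm hEnt hne zs hzpos hlt using H
  have hEntPsi : ∀ ξ : Fin N → ℝ, Ent ξ cinf = ∑ i, Psi (ξ i) (cinf i) := fun _ => rfl
  have hGterm : ∀ (z : Fin N → ℝ), (∀ i, 0 < z i) → ∀ r : Fin R,
      0 ≤ k r * cpow cinf (y r) *
        Psi (cpow z (y r) / cpow cinf (y r)) (cpow z (y' r) / cpow cinf (y' r)) := by
    intro z hz r
    have h1 : 0 < cpow z (y r) / cpow cinf (y r) :=
      div_pos (cpow_pos hz _) (cpow_pos hcinf _)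
    have h2 : 0 < cpow z (y' r) / cpow cinf (y' r) :=
      div_pos (cpow_pos hz _) (cpow_pos hcinf _)
    exact mul_nonneg (mul_nonneg (hk r).le (cpow_pos hcinf _).le) (psi_nonneg h1 h2)
  have hGnn : ∀ z : Fin N → ℝ, (∀ i, 0 < z i) → 0 ≤ Gfun y y' k cinf z := by
    intro z hz
    unfold Gfun
    exact mul_nonneg (by norm_num) (Finset.sum_nonneg fun r _ => hGterm z hz r)
  have hDnn : ∀ n, 0 ≤ ∑ i, Psi (zs n i) (ξs n i) :=
    fun n => Finset.sum_nonneg fun i _ => psi_nonneg (hzpos n i) (hpos n i)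
  have hEntnn : ∀ n, 0 ≤ Ent (ξs n) cinf := fun n => by
    rw [hEntPsi]; exact Finset.sum_nonneg fun i _ => psi_nonneg (hpos n i) (hcinf i)
  have hinvpos : ∀ n : ℕ, (0:ℝ) < ((n:ℝ)+1)⁻¹ := fun n => by positivity
  have hinv1 : ∀ n : ℕ, ((n:ℝ)+1)⁻¹ ≤ 1 := fun n => by
    rw [inv_le_one_iff₀]; right; linarith [Nat.cast_nonneg (α := ℝ) n]
  have hltK : ∀ n, lam1 * (∑ i, Psi (zs n i) (ξs n i)) + Gfun y y' k cinf (zs n) < K := by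
    intro n
    calc lam1 * (∑ i, Psi (zs n i) (ξs n i)) + Gfun y y' k cinf (zs n)
        < ((n:ℝ)+1)⁻¹ * Ent (ξs n) cinf := hlt n
      _ ≤ 1 * K := mul_le_mul (hinv1 n) (hEnt n) (hEntnn n) one_pos.le
      _ = K := one_mul K
  -- per-coordinate bounds
  have hPsiX : ∀ n i, Psi (ξs n i) (cinf i) ≤ K := by
    intro n i
    have h1 : Psi (ξs n i) (cinf i) ≤ ∑ j, Psi (ξs n j) (cinf j) :=
      Finset.single_le_sum (f := fun j => Psi (ξs n j) (cinf j))
        (fun j _ => psi_nonneg (hpos n j) (hcinf j)) (Finset.mem_univ i)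
    calc Psi (ξs n i) (cinf i) ≤ Ent (ξs n) cinf := by rw [hEntPsi]; exact h1
      _ ≤ K := hEnt n
  have hPsiZ : ∀ n i, Psi (zs n i) (ξs n i) ≤ K / lam1 := by
    intro n i
    have h1 : Psi (zs n i) (ξs n i) ≤ ∑ j, Psi (zs n j) (ξs n j) :=
      Finset.single_le_sum (f := fun j => Psi (zs n j) (ξs n j))
        (fun j _ => psi_nonneg (hzpos n j) (hpos n j)) (Finset.mem_univ i)
    have h2 : lam1 * (∑ j, Psi (zs n j) (ξs n j)) ≤ K := by
      have := hltK n
      have := hGnn (zs n) (hzpos n)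
      linarith
    rw [le_div_iff₀ hlam1]
    calc Psi (zs n i) (ξs n i) * lam1 ≤ (∑ j, Psi (zs n j) (ξs n j)) * lam1 :=
          mul_le_mul_of_nonneg_right h1 hlam1.le
      _ = lam1 * (∑ j, Psi (zs n j) (ξs n j)) := mul_comm _ _
      _ ≤ K := h2
  -- the compact box
  set Bc : Fin N → ℝ := fun i =>
    (Real.sqrt (cinf i) + Real.sqrt K + Real.sqrt (K / lam1)) ^ 2 with hBc
  have hsqX : ∀ n i, Real.sqrt (ξs n i) ≤ Real.sqrt (cinf i) + Real.sqrt K :=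
    fun n i => sqrt_le_of_psi_le (hpos n i) (hcinf i) (hPsiX n i)
  have hsqZ : ∀ n i, Real.sqrt (zs n i) ≤
      Real.sqrt (cinf i) + Real.sqrt K + Real.sqrt (K / lam1) := by
    intro n i
    have := sqrt_le_of_psi_le (hzpos n i) (hpos n i) (hPsiZ n i)
    linarith [hsqX n i]
  have hξmem : ∀ n, ξs n ∈ Set.univ.pi (fun i => Set.Icc (0:ℝ) (Bc i)) := by
    intro n
    rw [Set.mem_univ_pi]
    intro i
    constructor
    · exact (hpos n i).le
    · calc ξs n i = Real.sqrt (ξs n i) ^ 2 := (Real.sq_sqrt (hpos n i).le).symm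
        _ ≤ Bc i := by
            rw [hBc]
            have h0 : (0:ℝ) ≤ Real.sqrt (ξs n i) := Real.sqrt_nonneg _
            have h1 : Real.sqrt (ξs n i) ≤
                Real.sqrt (cinf i) + Real.sqrt K + Real.sqrt (K / lam1) := by
              linarith [hsqX n i, Real.sqrt_nonneg (K / lam1)]
            exact pow_le_pow_left₀ h0 h1 2
  have hzmem : ∀ n, zs n ∈ Set.univ.pi (fun i => Set.Icc (0:ℝ) (Bc i)) := by
    intro n
    rw [Set.mem_univ_pi]
    intro i
    constructor
    · exact (hzpos n i).le
    · calc zs n i = Real.sqrt (zs n i) ^ 2 := (Real.sq_sqrt (hzpos n i).le).symm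
        _ ≤ Bc i := by
            rw [hBc]
            exact pow_le_pow_left₀ (Real.sqrt_nonneg _) (hsqZ n i) 2
  -- normalized differences
  have hδpos : ∀ n, 0 < ‖ξs n - cinf‖ := fun n => norm_pos_iff.2 (sub_ne_zero.2 (hne n))
  set an : ℕ → (Fin N → ℝ) := fun n => ‖ξs n - cinf‖⁻¹ • (ξs n - cinf) with han
  have hannorm : ∀ n, ‖an n‖ = 1 := by
    intro n
    rw [han]
    rw [norm_smul, norm_inv, norm_norm]
    field_simp
    exact div_self (hδpos n).ne'
  have hanmem : ∀ n, an n ∈ Metric.closedBall (0 : Fin N → ℝ) 1 := by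
    intro n
    rw [Metric.mem_closedBall, dist_zero_right, hannorm n]
  -- compactness and extraction
  have hTcomp : IsCompact (Set.univ.pi fun i => Set.Icc (0:ℝ) (Bc i)) :=
    isCompact_univ_pi fun i => isCompact_Icc
  have hBcomp : IsCompact (Metric.closedBall (0 : Fin N → ℝ) 1) :=
    isCompact_closedBall _ _
  obtain ⟨⟨ξl, zl, al⟩, hmemL, φ, hφmono, hφtend⟩ :=
    (hTcomp.prod (hTcomp.prod hBcomp)).tendsto_subseq
      (x := fun n => (ξs n, zs n, an n))
      (fun n => Set.mk_mem_prod (hξmem n) (Set.mk_mem_prod (hzmem n) (hanmem n)))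
  have hξtend : Tendsto (fun n => ξs (φ n)) atTop (𝓝 ξl) :=
    (continuous_fst.tendsto _).comp hφtend
  have hztend : Tendsto (fun n => zs (φ n)) atTop (𝓝 zl) :=
    ((continuous_fst.comp continuous_snd).tendsto _).comp hφtend
  have hatend : Tendsto (fun n => an (φ n)) atTop (𝓝 al) :=
    ((continuous_snd.comp continuous_snd).tendsto _).comp hφtend
  have hξi : ∀ i, Tendsto (fun n => ξs (φ n) i) atTop (𝓝 (ξl i)) :=
    fun i => tendsto_pi_nhds.1 hξtend i
  have hzi : ∀ i, Tendsto (fun n => zs (φ n) i) atTop (𝓝 (zl i)) :=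
    fun i => tendsto_pi_nhds.1 hztend i
  have hai : ∀ i, Tendsto (fun n => an (φ n) i) atTop (𝓝 (al i)) :=
    fun i => tendsto_pi_nhds.1 hatend i
  have hξlnn : ∀ i, 0 ≤ ξl i := fun i => (Set.mem_univ_pi.1 hmemL.1 i).1
  have hzlnn : ∀ i, 0 ≤ zl i := fun i => (Set.mem_univ_pi.1 hmemL.2.1 i).1
  -- decay of the dissipation along the subsequence
  have hφge : ∀ n : ℕ, ((n:ℝ)+1) ≤ ((φ n : ℕ):ℝ)+1 := by
    intro n
    have h : n ≤ φ n := hφmono.le_apply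
    have := (Nat.cast_le (α := ℝ)).2 h; linarith
  have hinvφ : ∀ n : ℕ, (((φ n : ℕ):ℝ)+1)⁻¹ ≤ ((n:ℝ)+1)⁻¹ := by
    intro n
    exact inv_anti₀ (by positivity) (hφge n)
  have htendinv : Tendsto (fun n : ℕ => ((n:ℝ)+1)⁻¹) atTop (𝓝 0) := by
    have := tendsto_one_div_add_atTop_nhds_zero_nat (𝕜 := ℝ)
    simpa [one_div] using this
  have hDGle : ∀ n : ℕ, lam1 * (∑ i, Psi (zs (φ n) i) (ξs (φ n) i))
      + Gfun y y' k cinf (zs (φ n)) ≤ ((n:ℝ)+1)⁻¹ * K := by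
    intro n
    calc lam1 * (∑ i, Psi (zs (φ n) i) (ξs (φ n) i)) + Gfun y y' k cinf (zs (φ n))
        ≤ (((φ n : ℕ):ℝ)+1)⁻¹ * Ent (ξs (φ n)) cinf := (hlt (φ n)).le
      _ ≤ ((n:ℝ)+1)⁻¹ * K :=
          mul_le_mul (hinvφ n) (hEnt _) (hEntnn _) (hinvpos n).le
  have hDle : ∀ n : ℕ, ∑ i, Psi (zs (φ n) i) (ξs (φ n) i) ≤ ((n:ℝ)+1)⁻¹ * (K / lam1) := by
    intro n
    have h1 := hDGle n
    have h2 := hGnn (zs (φ n)) (hzpos (φ n))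
    rw [show ((n:ℝ)+1)⁻¹ * (K / lam1) = (((n:ℝ)+1)⁻¹ * K) / lam1 by ring,
      le_div_iff₀ hlam1]
    nlinarith
  have hGle : ∀ n : ℕ, Gfun y y' k cinf (zs (φ n)) ≤ ((n:ℝ)+1)⁻¹ * K := by
    intro n
    have h1 := hDGle n
    have h2 := hDnn (φ n)
    nlinarith
  have hDtend : Tendsto (fun n => ∑ i, Psi (zs (φ n) i) (ξs (φ n) i)) atTop (𝓝 0) := by
    refine squeeze_zero (fun n => hDnn (φ n)) (fun n => hDle n) ?_
    have := htendinv.mul_const (K / lam1)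
    simpa using this
  have hGtend : Tendsto (fun n => Gfun y y' k cinf (zs (φ n))) atTop (𝓝 0) := by
    refine squeeze_zero (fun n => hGnn _ (hzpos (φ n))) (fun n => hGle n) ?_
    have := htendinv.mul_const K
    simpa using this
  -- the two limits coincide
  have hzlξl : zl = ξl := by
    funext i
    have hsq : ∀ n, (Real.sqrt (zs (φ n) i) - Real.sqrt (ξs (φ n) i)) ^ 2 ≤
        ∑ j, Psi (zs (φ n) j) (ξs (φ n) j) := by
      intro n
      refine le_trans (psi_ge_sq (hzpos _ i) (hpos _ i)) ?_
      exact Finset.single_le_sum (f := fun j => Psi (zs (φ n) j) (ξs (φ n) j))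
        (fun j _ => psi_nonneg (hzpos _ j) (hpos _ j)) (Finset.mem_univ i)
    have h0 : Tendsto (fun n => Real.sqrt (zs (φ n) i) - Real.sqrt (ξs (φ n) i))
        atTop (𝓝 0) := by
      refine squeeze_zero_norm (fun n => ?_) (by simpa using hDtend.sqrt)
      rw [Real.norm_eq_abs, ← Real.sqrt_sq_eq_abs]
      exact Real.sqrt_le_sqrt (hsq n)
    have h1 : Tendsto (fun n => Real.sqrt (zs (φ n) i) - Real.sqrt (ξs (φ n) i))
        atTop (𝓝 (Real.sqrt (zl i) - Real.sqrt (ξl i))) :=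
      ((Real.continuous_sqrt.tendsto _).comp (hzi i)).sub
        ((Real.continuous_sqrt.tendsto _).comp (hξi i))
    have h2 : Real.sqrt (zl i) - Real.sqrt (ξl i) = 0 := tendsto_nhds_unique h1 h0
    have h3 : Real.sqrt (zl i) = Real.sqrt (ξl i) := by linarith
    calc zl i = Real.sqrt (zl i) ^ 2 := (Real.sq_sqrt (hzlnn i)).symm
      _ = Real.sqrt (ξl i) ^ 2 := by rw [h3]
      _ = ξl i := Real.sq_sqrt (hξlnn i)
  -- the limit satisfies the mass constraint
  have hQξl : Q.mulVec ξl = M := by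
    funext j
    have h1 : Tendsto (fun n => ∑ i, Q j i * ξs (φ n) i) atTop (𝓝 (∑ i, Q j i * ξl i)) :=
      tendsto_finset_sum _ fun i _ => (hξi i).const_mul _
    have h2 : (fun n => ∑ i, Q j i * ξs (φ n) i) = fun _ => M j := by
      funext n
      have h3 := congrFun (hQm (φ n)) j
      simpa [Matrix.mulVec, dotProduct] using h3
    rw [h2] at h1
    have h4 : (∑ i, Q j i * ξl i) = M j := (tendsto_nhds_unique tendsto_const_nhds h1).symm
    simpa [Matrix.mulVec, dotProduct] using h4
  -- the limit satisfies the complex-balance relations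
  have hrel : ∀ r, cpow (fun i => zl i / cinf i) (y r) = cpow (fun i => zl i / cinf i) (y' r) := by
    intro r
    have hKr : 0 < k r * cpow cinf (y r) := mul_pos (hk r) (cpow_pos hcinf _)
    have hterm : ∀ n, Psi (cpow (zs (φ n)) (y r) / cpow cinf (y r))
        (cpow (zs (φ n)) (y' r) / cpow cinf (y' r)) ≤
        (2 / (k r * cpow cinf (y r))) * Gfun y y' k cinf (zs (φ n)) := by
      intro n
      have h1 : k r * cpow cinf (y r) * Psi (cpow (zs (φ n)) (y r) / cpow cinf (y r))
          (cpow (zs (φ n)) (y' r) / cpow cinf (y' r)) ≤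
          ∑ r', k r' * cpow cinf (y r') *
            Psi (cpow (zs (φ n)) (y r') / cpow cinf (y r'))
              (cpow (zs (φ n)) (y' r') / cpow cinf (y' r')) :=
        Finset.single_le_sum (fun r' _ => hGterm (zs (φ n)) (hzpos (φ n)) r')
          (Finset.mem_univ r)
      have h2 : k r * cpow cinf (y r) * Psi (cpow (zs (φ n)) (y r) / cpow cinf (y r))
          (cpow (zs (φ n)) (y' r) / cpow cinf (y' r)) ≤
          2 * Gfun y y' k cinf (zs (φ n)) := by
        unfold Gfun; linarith [h1]
      rw [div_mul_eq_mul_div, le_div_iff₀ hKr]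
      nlinarith [h2]
    have hupos : ∀ n, 0 < cpow (zs (φ n)) (y r) / cpow cinf (y r) :=
      fun n => div_pos (cpow_pos (hzpos (φ n)) _) (cpow_pos hcinf _)
    have hvpos : ∀ n, 0 < cpow (zs (φ n)) (y' r) / cpow cinf (y' r) :=
      fun n => div_pos (cpow_pos (hzpos (φ n)) _) (cpow_pos hcinf _)
    have hsd : Tendsto (fun n => Real.sqrt (cpow (zs (φ n)) (y r) / cpow cinf (y r)) -
        Real.sqrt (cpow (zs (φ n)) (y' r) / cpow cinf (y' r))) atTop (𝓝 0) := by
      have hb : Tendsto (fun n => Real.sqrt ((2 / (k r * cpow cinf (y r))) *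
          Gfun y y' k cinf (zs (φ n)))) atTop (𝓝 0) := by
        have := (hGtend.const_mul (2 / (k r * cpow cinf (y r)))).sqrt
        simpa using this
      refine squeeze_zero_norm (fun n => ?_) hb
      rw [Real.norm_eq_abs, ← Real.sqrt_sq_eq_abs]
      exact Real.sqrt_le_sqrt (le_trans (psi_ge_sq (hupos n) (hvpos n)) (hterm n))
    have hu : Tendsto (fun n => cpow (zs (φ n)) (y r) / cpow cinf (y r)) atTop
        (𝓝 (cpow zl (y r) / cpow cinf (y r))) :=
      (((continuous_cpow (y r)).tendsto _).comp hztend).div_const _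
    have hv : Tendsto (fun n => cpow (zs (φ n)) (y' r) / cpow cinf (y' r)) atTop
        (𝓝 (cpow zl (y' r) / cpow cinf (y' r))) :=
      (((continuous_cpow (y' r)).tendsto _).comp hztend).div_const _
    have h2 : Real.sqrt (cpow zl (y r) / cpow cinf (y r)) =
        Real.sqrt (cpow zl (y' r) / cpow cinf (y' r)) := by
      have h3 := tendsto_nhds_unique (hu.sqrt.sub hv.sqrt) hsd
      linarith
    have hnn1 : 0 ≤ cpow zl (y r) / cpow cinf (y r) :=
      div_nonneg (cpow_nonneg hzlnn _) (cpow_pos hcinf _).le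
    have hnn2 : 0 ≤ cpow zl (y' r) / cpow cinf (y' r) :=
      div_nonneg (cpow_nonneg hzlnn _) (cpow_pos hcinf _).le
    calc cpow (fun i => zl i / cinf i) (y r)
        = cpow zl (y r) / cpow cinf (y r) := cpow_div _ _ _
      _ = cpow zl (y' r) / cpow cinf (y' r) := by
          rw [← Real.sq_sqrt hnn1, h2, Real.sq_sqrt hnn2]
      _ = cpow (fun i => zl i / cinf i) (y' r) := (cpow_div _ _ _).symm
  -- the limit is complex balanced
  have hzl_eq : zl = fun i => (zl i / cinf i) * cinf i :=
    funext fun i => (div_mul_cancel₀ _ (hcinf i).ne').symm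
  have hbal_zl : IsComplexBalanced y y' k zl := by
    rw [hzl_eq]
    exact balanced_of_rel y y' k cinf hbal _ hrel
  have hQzl : Q.mulVec zl = M := by rw [hzlξl]; exact hQξl
  -- case distinction on the limit
  by_cases hzero : ∃ i, zl i = 0
  · exact hnobd zl hzlnn hzero hQzl hbal_zl
  · push_neg at hzero
    have hzlpos : ∀ i, 0 < zl i := fun i => lt_of_le_of_ne (hzlnn i) (Ne.symm (hzero i))
    have hzlc : zl = cinf := huniq zl hzlpos hQzl hbal_zl
    have hξlc : ξl = cinf := by rw [← hzlξl]; exact hzlc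
    -- quadratic refinement near the equilibrium
    set Cc : ℝ := ∑ i, (cinf i)⁻¹ with hCc
    have hCcnn : 0 ≤ Cc := Finset.sum_nonneg fun i _ => (inv_pos.2 (hcinf i)).le
    have habs : ∀ n i, |ξs n i - cinf i| ≤ ‖ξs n - cinf‖ := by
      intro n i
      have := norm_le_pi_norm (ξs n - cinf) i
      simpa using this
    have hEntδ : ∀ n, Ent (ξs n) cinf ≤ Cc * ‖ξs n - cinf‖ ^ 2 := by
      intro n
      rw [hEntPsi, hCc, Finset.sum_mul]
      refine Finset.sum_le_sum fun i _ => ?_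
      calc Psi (ξs n i) (cinf i) ≤ (ξs n i - cinf i) ^ 2 / cinf i :=
            psi_le_sq (hpos n i) (hcinf i)
        _ ≤ ‖ξs n - cinf‖ ^ 2 / cinf i := by
            have h1 : (ξs n i - cinf i) ^ 2 ≤ ‖ξs n - cinf‖ ^ 2 := by
              rw [← sq_abs (ξs n i - cinf i)]
              exact pow_le_pow_left₀ (abs_nonneg _) (habs n i) 2
            exact (div_le_div_iff_of_pos_right (hcinf i)).2 h1
        _ = (cinf i)⁻¹ * ‖ξs n - cinf‖ ^ 2 := by rw [div_eq_inv_mul]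
    have hddpos : ∀ n, 0 < ‖ξs (φ n) - cinf‖ := fun n => hδpos (φ n)
    have hDGδ : ∀ n : ℕ, lam1 * (∑ i, Psi (zs (φ n) i) (ξs (φ n) i))
        + Gfun y y' k cinf (zs (φ n)) ≤ ((n:ℝ)+1)⁻¹ * Cc * ‖ξs (φ n) - cinf‖ ^ 2 := by
      intro n
      calc lam1 * (∑ i, Psi (zs (φ n) i) (ξs (φ n) i)) + Gfun y y' k cinf (zs (φ n))
          ≤ (((φ n : ℕ):ℝ)+1)⁻¹ * Ent (ξs (φ n)) cinf := (hlt (φ n)).le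
        _ ≤ (((φ n : ℕ):ℝ)+1)⁻¹ * (Cc * ‖ξs (φ n) - cinf‖ ^ 2) :=
            mul_le_mul_of_nonneg_left (hEntδ (φ n)) (hinvpos (φ n)).le
        _ ≤ ((n:ℝ)+1)⁻¹ * (Cc * ‖ξs (φ n) - cinf‖ ^ 2) :=
            mul_le_mul_of_nonneg_right (hinvφ n) (by positivity)
        _ = ((n:ℝ)+1)⁻¹ * Cc * ‖ξs (φ n) - cinf‖ ^ 2 := by ring
    -- Step B : (z - ξ)/δ → 0 componentwise
    have hstepB : ∀ i, Tendsto
        (fun n => (zs (φ n) i - ξs (φ n) i) / ‖ξs (φ n) - cinf‖) atTop (𝓝 0) := by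
      intro i
      have hsq : ∀ n, (Real.sqrt (zs (φ n) i) - Real.sqrt (ξs (φ n) i)) ^ 2 ≤
          ∑ j, Psi (zs (φ n) j) (ξs (φ n) j) := by
        intro n
        refine le_trans (psi_ge_sq (hzpos _ i) (hpos _ i)) ?_
        exact Finset.single_le_sum (f := fun j => Psi (zs (φ n) j) (ξs (φ n) j))
          (fun j _ => psi_nonneg (hzpos _ j) (hpos _ j)) (Finset.mem_univ i)
      have hsd : Tendsto (fun n => (Real.sqrt (zs (φ n) i) - Real.sqrt (ξs (φ n) i))
          / ‖ξs (φ n) - cinf‖) atTop (𝓝 0) := by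
        have hb : Tendsto (fun n : ℕ => Real.sqrt (((n:ℝ)+1)⁻¹ * (Cc / lam1))) atTop (𝓝 0) := by
          have := (htendinv.mul_const (Cc / lam1)).sqrt
          simpa using this
        refine squeeze_zero_norm (fun n => ?_) hb
        have h3 : ((Real.sqrt (zs (φ n) i) - Real.sqrt (ξs (φ n) i))
            / ‖ξs (φ n) - cinf‖) ^ 2 ≤ ((n:ℝ)+1)⁻¹ * (Cc / lam1) := by
          rw [div_pow, div_le_iff₀ (pow_pos (hddpos n) 2)]
          have h4 := mul_le_mul_of_nonneg_left (hsq n) hlam1.le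
          have h5 := hGnn (zs (φ n)) (hzpos (φ n))
          have h6 := hDGδ n
          have hfl : ((n:ℝ)+1)⁻¹ * (Cc / lam1) * lam1 = ((n:ℝ)+1)⁻¹ * Cc := by
            field_simp
          nlinarith [h4, h5, h6]
        rw [Real.norm_eq_abs, ← Real.sqrt_sq_eq_abs]
        exact Real.sqrt_le_sqrt h3
      have hzci : Tendsto (fun n => zs (φ n) i) atTop (𝓝 (cinf i)) := by
        have := hzi i; rwa [hzlc] at this
      have hξci : Tendsto (fun n => ξs (φ n) i) atTop (𝓝 (cinf i)) := by
        have := hξi i; rwa [hξlc] at this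
      have hsum : Tendsto (fun n => Real.sqrt (zs (φ n) i) + Real.sqrt (ξs (φ n) i))
          atTop (𝓝 (Real.sqrt (cinf i) + Real.sqrt (cinf i))) :=
        ((Real.continuous_sqrt.tendsto _).comp hzci).add
          ((Real.continuous_sqrt.tendsto _).comp hξci)
      have hmul := hsd.mul hsum
      rw [zero_mul] at hmul
      refine hmul.congr fun n => ?_
      have hzz := Real.sq_sqrt (hzpos (φ n) i).le
      have hξξ := Real.sq_sqrt (hpos (φ n) i).le
      calc (Real.sqrt (zs (φ n) i) - Real.sqrt (ξs (φ n) i)) / ‖ξs (φ n) - cinf‖ *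
            (Real.sqrt (zs (φ n) i) + Real.sqrt (ξs (φ n) i))
          = (Real.sqrt (zs (φ n) i) ^ 2 - Real.sqrt (ξs (φ n) i) ^ 2)
            / ‖ξs (φ n) - cinf‖ := by ring
        _ = (zs (φ n) i - ξs (φ n) i) / ‖ξs (φ n) - cinf‖ := by rw [hzz, hξξ]
    -- Step C : (z - cinf)/δ → al componentwise
    have hanc : ∀ n i, (ξs n i - cinf i) / ‖ξs n - cinf‖ = an n i := by
      intro n i
      rw [han]
      simp [Pi.smul_apply, Pi.sub_apply, smul_eq_mul, div_eq_inv_mul]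
    have hstepC : ∀ i, Tendsto
        (fun n => (zs (φ n) i - cinf i) / ‖ξs (φ n) - cinf‖) atTop (𝓝 (al i)) := by
      intro i
      have h2 : Tendsto (fun n => (ξs (φ n) i - cinf i) / ‖ξs (φ n) - cinf‖)
          atTop (𝓝 (al i)) :=
        (hai i).congr fun n => (hanc (φ n) i).symm
      have h3 := (hstepB i).add h2
      rw [zero_add] at h3
      refine h3.congr fun n => ?_
      rw [← add_div]
      ring_nf
    -- Step D : log(z/cinf)/δ → al/cinf componentwise
    have hlogder : HasDerivAt (fun t : ℝ => Real.log (1 + t)) 1 0 := by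
      have h := ((hasDerivAt_id (0:ℝ)).const_add 1).log (by norm_num)
      simpa using h
    have hzci : ∀ i, Tendsto (fun n => zs (φ n) i) atTop (𝓝 (cinf i)) := by
      intro i; have := hzi i; rwa [hzlc] at this
    have hstepD : ∀ i, Tendsto
        (fun n => Real.log (zs (φ n) i / cinf i) / ‖ξs (φ n) - cinf‖) atTop
        (𝓝 (al i / cinf i)) := by
      intro i
      have hs0 : Tendsto (fun n => (zs (φ n) i - cinf i) / cinf i) atTop (𝓝 0) := by
        have h1 := ((hzci i).sub_const (cinf i)).div_const (cinf i)
        simpa using h1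
      have hsr : Tendsto (fun n => ((zs (φ n) i - cinf i) / cinf i) / ‖ξs (φ n) - cinf‖)
          atTop (𝓝 (al i / cinf i)) := by
        have h1 := (hstepC i).div_const (cinf i)
        refine h1.congr fun n => ?_
        ring
      have h2 := tendsto_helper hlogder (by simp) hs0 hsr
      rw [one_mul] at h2
      refine h2.congr fun n => ?_
      have e : (1:ℝ) + (zs (φ n) i - cinf i) / cinf i = zs (φ n) i / cinf i := by
        rw [← div_self (hcinf i).ne', ← add_div]
        ring_nf
      rw [e]
    -- per-reaction linearization
    have hexpder : HasDerivAt (fun t : ℝ => Real.exp t - 1) 1 0 := by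
      simpa using (Real.hasDerivAt_exp 0).sub_const 1
    have hrel2 : ∀ r, ∑ i, ((y' r i : ℝ) - (y r i : ℝ)) * (al i / cinf i) = 0 := by
      intro r
      set A : ℕ → ℝ := fun n => ∑ i, (y r i : ℝ) * Real.log (zs (φ n) i / cinf i) with hA
      set B : ℕ → ℝ := fun n => ∑ i, (y' r i : ℝ) * Real.log (zs (φ n) i / cinf i) with hB
      set α : ℝ := ∑ i, (y r i : ℝ) * (al i / cinf i) with hα
      set β : ℝ := ∑ i, (y' r i : ℝ) * (al i / cinf i) with hβ
      have hθ0 : ∀ i, Tendsto (fun n => Real.log (zs (φ n) i / cinf i)) atTop (𝓝 0) := by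
        intro i
        have h1 : Tendsto (fun n => zs (φ n) i / cinf i) atTop (𝓝 1) := by
          have := (hzci i).div_const (cinf i)
          rwa [div_self (hcinf i).ne'] at this
        have h2 := ((Real.continuousAt_log one_ne_zero).tendsto).comp h1
        simpa [Function.comp_def] using h2
      have hA0 : Tendsto A atTop (𝓝 0) := by
        rw [hA]
        have := tendsto_finset_sum (Finset.univ : Finset (Fin N))
          (fun i _ => (hθ0 i).const_mul ((y r i : ℝ)))
        simpa using this
      have hB0 : Tendsto B atTop (𝓝 0) := by
        rw [hB]
        have := tendsto_finset_sum (Finset.univ : Finset (Fin N))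
          (fun i _ => (hθ0 i).const_mul ((y' r i : ℝ)))
        simpa using this
      have hAd : Tendsto (fun n => A n / ‖ξs (φ n) - cinf‖) atTop (𝓝 α) := by
        have h1 := tendsto_finset_sum (Finset.univ : Finset (Fin N))
          (fun i _ => (hstepD i).const_mul ((y r i : ℝ)))
        rw [hα]
        refine h1.congr fun n => ?_
        rw [hA, Finset.sum_div]
        exact Finset.sum_congr rfl fun i _ => (mul_div_assoc _ _ _).symm
      have hBd : Tendsto (fun n => B n / ‖ξs (φ n) - cinf‖) atTop (𝓝 β) := by
        have h1 := tendsto_finset_sum (Finset.univ : Finset (Fin N))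
          (fun i _ => (hstepD i).const_mul ((y' r i : ℝ)))
        rw [hβ]
        refine h1.congr fun n => ?_
        rw [hB, Finset.sum_div]
        exact Finset.sum_congr rfl fun i _ => (mul_div_assoc _ _ _).symm
      have hABd : Tendsto (fun n => (A n - B n) / ‖ξs (φ n) - cinf‖) atTop (𝓝 (α - β)) := by
        have h1 := hAd.sub hBd
        refine h1.congr fun n => ?_
        rw [sub_div]
      have hAB0 : Tendsto (fun n => A n - B n) atTop (𝓝 0) := by
        have := hA0.sub hB0
        simpa using this
      have hEB : Tendsto (fun n => (Real.exp (A n - B n) - 1) / ‖ξs (φ n) - cinf‖)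
          atTop (𝓝 (α - β)) := by
        have h1 := tendsto_helper hexpder (by simp) hAB0 hABd
        rwa [one_mul] at h1
      have hexpB : Tendsto (fun n => Real.exp (B n)) atTop (𝓝 1) := by
        have := (Real.continuous_exp.tendsto _).comp hB0
        simpa [Function.comp_def] using this
      -- u, v expressed as exponentials
      have hueq : ∀ n, cpow (zs (φ n)) (y r) / cpow cinf (y r) = Real.exp (A n) := by
        intro n
        rw [← cpow_div, cpow_eq_exp (fun i => div_pos (hzpos (φ n) i) (hcinf i)), hA]
      have hveq : ∀ n, cpow (zs (φ n)) (y' r) / cpow cinf (y' r) = Real.exp (B n) := by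
        intro n
        rw [← cpow_div, cpow_eq_exp (fun i => div_pos (hzpos (φ n) i) (hcinf i)), hB]
      -- limit of (u - v)/δ via the dissipation bound
      have hKr : 0 < k r * cpow cinf (y r) := mul_pos (hk r) (cpow_pos hcinf _)
      have hterm : ∀ n, Psi (cpow (zs (φ n)) (y r) / cpow cinf (y r))
          (cpow (zs (φ n)) (y' r) / cpow cinf (y' r)) ≤
          (2 / (k r * cpow cinf (y r))) * Gfun y y' k cinf (zs (φ n)) := by
        intro n
        have h1 : k r * cpow cinf (y r) * Psi (cpow (zs (φ n)) (y r) / cpow cinf (y r))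
            (cpow (zs (φ n)) (y' r) / cpow cinf (y' r)) ≤
            ∑ r', k r' * cpow cinf (y r') *
              Psi (cpow (zs (φ n)) (y r') / cpow cinf (y r'))
                (cpow (zs (φ n)) (y' r') / cpow cinf (y' r')) :=
          Finset.single_le_sum (fun r' _ => hGterm (zs (φ n)) (hzpos (φ n)) r')
            (Finset.mem_univ r)
        have h2 : k r * cpow cinf (y r) * Psi (cpow (zs (φ n)) (y r) / cpow cinf (y r))
            (cpow (zs (φ n)) (y' r) / cpow cinf (y' r)) ≤
            2 * Gfun y y' k cinf (zs (φ n)) := by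
          unfold Gfun; linarith [h1]
        rw [div_mul_eq_mul_div, le_div_iff₀ hKr]
        nlinarith [h2]
      have hupos : ∀ n, 0 < cpow (zs (φ n)) (y r) / cpow cinf (y r) :=
        fun n => div_pos (cpow_pos (hzpos (φ n)) _) (cpow_pos hcinf _)
      have hvpos : ∀ n, 0 < cpow (zs (φ n)) (y' r) / cpow cinf (y' r) :=
        fun n => div_pos (cpow_pos (hzpos (φ n)) _) (cpow_pos hcinf _)
      have hGδ : ∀ n : ℕ, Gfun y y' k cinf (zs (φ n)) ≤
          ((n:ℝ)+1)⁻¹ * Cc * ‖ξs (φ n) - cinf‖ ^ 2 := by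
        intro n
        have h1 := hDGδ n
        have h2 := hDnn (φ n)
        nlinarith
      have hsdq : Tendsto (fun n => (Real.sqrt (cpow (zs (φ n)) (y r) / cpow cinf (y r)) -
          Real.sqrt (cpow (zs (φ n)) (y' r) / cpow cinf (y' r))) / ‖ξs (φ n) - cinf‖)
          atTop (𝓝 0) := by
        have hb : Tendsto (fun n : ℕ => Real.sqrt (((n:ℝ)+1)⁻¹ *
            (2 * Cc / (k r * cpow cinf (y r))))) atTop (𝓝 0) := by
          have := (htendinv.mul_const (2 * Cc / (k r * cpow cinf (y r)))).sqrt
          simpa using this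
        refine squeeze_zero_norm (fun n => ?_) hb
        have h3 : ((Real.sqrt (cpow (zs (φ n)) (y r) / cpow cinf (y r)) -
            Real.sqrt (cpow (zs (φ n)) (y' r) / cpow cinf (y' r)))
            / ‖ξs (φ n) - cinf‖) ^ 2 ≤
            ((n:ℝ)+1)⁻¹ * (2 * Cc / (k r * cpow cinf (y r))) := by
          rw [div_pow, div_le_iff₀ (pow_pos (hddpos n) 2)]
          have h4 := le_trans (psi_ge_sq (hupos n) (hvpos n)) (hterm n)
          have h5 := hGδ n
          have h6 := mul_le_mul_of_nonneg_left h5 (le_of_lt (by positivity :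
            (0:ℝ) < 2 / (k r * cpow cinf (y r))))
          have h7 : (2 / (k r * cpow cinf (y r))) * (((n:ℝ)+1)⁻¹ * Cc *
              ‖ξs (φ n) - cinf‖ ^ 2) =
              ((n:ℝ)+1)⁻¹ * (2 * Cc / (k r * cpow cinf (y r))) *
              ‖ξs (φ n) - cinf‖ ^ 2 := by ring
          calc ((Real.sqrt (cpow (zs (φ n)) (y r) / cpow cinf (y r)) -
              Real.sqrt (cpow (zs (φ n)) (y' r) / cpow cinf (y' r)))) ^ 2
              ≤ (2 / (k r * cpow cinf (y r))) * Gfun y y' k cinf (zs (φ n)) := h4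
            _ ≤ ((n:ℝ)+1)⁻¹ * (2 * Cc / (k r * cpow cinf (y r))) *
                ‖ξs (φ n) - cinf‖ ^ 2 := by rw [← h7]; exact h6
        rw [Real.norm_eq_abs, ← Real.sqrt_sq_eq_abs]
        exact Real.sqrt_le_sqrt h3
      have hul : Tendsto (fun n => cpow (zs (φ n)) (y r) / cpow cinf (y r)) atTop (𝓝 1) := by
        have h1 := (((continuous_cpow (y r)).tendsto _).comp hztend).div_const
          (cpow cinf (y r))
        rw [hzlc, div_self (cpow_pos hcinf (y r)).ne'] at h1
        exact h1
      have hvl : Tendsto (fun n => cpow (zs (φ n)) (y' r) / cpow cinf (y' r)) atTop (𝓝 1) := by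
        have h1 := (((continuous_cpow (y' r)).tendsto _).comp hztend).div_const
          (cpow cinf (y' r))
        rw [hzlc, div_self (cpow_pos hcinf (y' r)).ne'] at h1
        exact h1
      have hssum : Tendsto (fun n => Real.sqrt (cpow (zs (φ n)) (y r) / cpow cinf (y r)) +
          Real.sqrt (cpow (zs (φ n)) (y' r) / cpow cinf (y' r))) atTop (𝓝 2) := by
        have h1 := (hul.sqrt).add (hvl.sqrt)
        simp only [Real.sqrt_one] at h1
        exact (by norm_num : (2:ℝ) = 1 + 1) ▸ h1
      have huv0 : Tendsto (fun n => (cpow (zs (φ n)) (y r) / cpow cinf (y r) -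
          cpow (zs (φ n)) (y' r) / cpow cinf (y' r)) / ‖ξs (φ n) - cinf‖) atTop (𝓝 0) := by
        have hmul := hsdq.mul hssum
        rw [zero_mul] at hmul
        refine hmul.congr fun n => ?_
        have hzz := Real.sq_sqrt (hupos n).le
        have hξξ := Real.sq_sqrt (hvpos n).le
        calc (Real.sqrt (cpow (zs (φ n)) (y r) / cpow cinf (y r)) -
              Real.sqrt (cpow (zs (φ n)) (y' r) / cpow cinf (y' r))) / ‖ξs (φ n) - cinf‖ *
              (Real.sqrt (cpow (zs (φ n)) (y r) / cpow cinf (y r)) +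
              Real.sqrt (cpow (zs (φ n)) (y' r) / cpow cinf (y' r)))
            = (Real.sqrt (cpow (zs (φ n)) (y r) / cpow cinf (y r)) ^ 2 -
              Real.sqrt (cpow (zs (φ n)) (y' r) / cpow cinf (y' r)) ^ 2)
              / ‖ξs (φ n) - cinf‖ := by ring
          _ = (cpow (zs (φ n)) (y r) / cpow cinf (y r) -
              cpow (zs (φ n)) (y' r) / cpow cinf (y' r)) / ‖ξs (φ n) - cinf‖ := by
              rw [hzz, hξξ]
      have huvl : Tendsto (fun n => (cpow (zs (φ n)) (y r) / cpow cinf (y r) -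
          cpow (zs (φ n)) (y' r) / cpow cinf (y' r)) / ‖ξs (φ n) - cinf‖) atTop
          (𝓝 (α - β)) := by
        have hmul := hexpB.mul hEB
        rw [one_mul] at hmul
        refine hmul.congr fun n => ?_
        rw [hueq n, hveq n]
        rw [← mul_div_assoc]
        congr 1
        rw [mul_sub, mul_one, ← Real.exp_add]
        congr 1
        ring
      have hαβ : α - β = 0 := tendsto_nhds_unique huvl huv0
      have : β - α = 0 := by linarith
      rw [hα, hβ] at this
      rw [← this]
      rw [← Finset.sum_sub_distrib]
      exact Finset.sum_congr rfl fun i _ => by ring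
    -- conclude : al is orthogonal to itself weighted by 1/cinf
    have hsp := hQspan (fun i => al i / cinf i) hrel2
    have hQan : ∀ n j, ∑ i, Q j i * an n i = 0 := by
      intro n j
      have h2 : Q.mulVec (an n) = 0 := by
        rw [han]
        rw [Matrix.mulVec_smul, Matrix.mulVec_sub, hQm n, hQcinf]
        simp
      have h3 := congrFun h2 j
      simpa [Matrix.mulVec, dotProduct] using h3
    have hQal : ∀ j, ∑ i, Q j i * al i = 0 := by
      intro j
      have h1 : Tendsto (fun n => ∑ i, Q j i * an (φ n) i) atTop (𝓝 (∑ i, Q j i * al i)) :=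
        tendsto_finset_sum _ fun i _ => (hai i).const_mul _
      have h2 : (fun n => ∑ i, Q j i * an (φ n) i) = fun _ => (0:ℝ) :=
        funext fun n => hQan (φ n) j
      rw [h2] at h1
      exact (tendsto_nhds_unique tendsto_const_nhds h1).symm
    have hperp : ∀ v ∈ Submodule.span ℝ (Set.range fun j => Q j), ∑ i, al i * v i = 0 := by
      intro v hv
      induction hv using Submodule.span_induction with
      | mem x hx =>
          obtain ⟨j, rfl⟩ := hx
          have := hQal j
          rw [← this]
          exact Finset.sum_congr rfl fun i _ => mul_comm _ _
      | zero => simp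
      | add a b ha hb hha hhb =>
          have : ∑ i, al i * (a + b) i = (∑ i, al i * a i) + ∑ i, al i * b i := by
            rw [← Finset.sum_add_distrib]
            exact Finset.sum_congr rfl fun i _ => by simp [Pi.add_apply]; ring
          rw [this, hha, hhb, add_zero]
      | smul c a ha hha =>
          have : ∑ i, al i * (c • a) i = c * ∑ i, al i * a i := by
            rw [Finset.mul_sum]
            exact Finset.sum_congr rfl fun i _ => by simp [Pi.smul_apply, smul_eq_mul]; ring
          rw [this, hha, mul_zero]
    have hzero2 := hperp _ hsp
    have hal0 : al = 0 := by
      have hterm2 : ∀ i : Fin N, 0 ≤ al i * (al i / cinf i) := by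
        intro i
        have : al i * (al i / cinf i) = al i ^ 2 / cinf i := by ring
        rw [this]
        exact div_nonneg (sq_nonneg _) (hcinf i).le
      funext i
      have h1 := (Finset.sum_eq_zero_iff_of_nonneg (fun i _ => hterm2 i)).1 hzero2 i
        (Finset.mem_univ i)
      rcases mul_eq_zero.1 h1 with h2 | h2
      · simpa using h2
      · have := (div_eq_zero_iff.1 h2).resolve_right (hcinf i).ne'
        simpa using this
    have hal1 : ‖al‖ = 1 := by
      have h1 : Tendsto (fun n => ‖an (φ n)‖) atTop (𝓝 ‖al‖) :=
        (continuous_norm.tendsto _).comp hatend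
      have h2 : (fun n => ‖an (φ n)‖) = fun _ => (1:ℝ) := funext fun n => hannorm (φ n)
      rw [h2] at h1
      exact (tendsto_nhds_unique tendsto_const_nhds h1).symm
    rw [hal0] at hal1
    simp at hal1


end Helpers

theorem convexified_entropy_dissipation_inf_pos {N R m : ℕ}
    (y y' : Fin R → Fin N → ℕ) (k : Fin R → ℝ) (hk : ∀ r, 0 < k r)
    (Q : Matrix (Fin m) (Fin N) ℝ) (hQrank : Q.rank = m)
    (hQker : ∀ j r, ∑ i, ((y' r i : ℝ) - (y r i : ℝ)) * Q j i = 0)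
    (hQspan : ∀ v : Fin N → ℝ, (∀ r, ∑ i, ((y' r i : ℝ) - (y r i : ℝ)) * v i = 0) →
      v ∈ Submodule.span ℝ (Set.range fun j => Q j))
    (M : Fin m → ℝ) (hM : ∀ j, 0 < M j)
    (cinf : Fin N → ℝ) (hcinf : ∀ i, 0 < cinf i)
    (hbal : IsComplexBalanced y y' k cinf) (hQcinf : Q.mulVec cinf = M)
    (huniq : ∀ z : Fin N → ℝ, (∀ i, 0 < z i) → Q.mulVec z = M →
      IsComplexBalanced y y' k z → z = cinf)
    (hnobd : ∀ z : Fin N → ℝ, (∀ i, 0 ≤ z i) → (∃ i, z i = 0) → Q.mulVec z = M →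
      ¬ IsComplexBalanced y y' k z)
    (lam1 : ℝ) (hlam1 : 0 < lam1) (K : ℝ) (hK : 0 < K) :
    ∃ lam2 > (0 : ℝ), ∀ ξ : Fin N → ℝ, (∀ i, 0 < ξ i) → Q.mulVec ξ = M →
      Ent ξ cinf ≤ K → ξ ≠ cinf →
        lam2 * Ent ξ cinf ≤
          convexification (fun z => Ffun lam1 cinf z + Gfun y y' k cinf z) ξ
            - Ffun lam1 cinf ξ := by
  obtain ⟨lam2, hlam2, hstar⟩ :=
    star y y' k hk Q hQspan M cinf hcinf hbal hQcinf huniq hnobd lam1 hlam1 K hK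
  refine ⟨lam2, hlam2, ?_⟩
  intro ξ hξ hQξ hEntK hneq
  set Φ : (Fin N → ℝ) → ℝ := fun z => Ffun lam1 cinf z + Gfun y y' k cinf z with hΦ
  set S : Set ℝ := {v : ℝ | ∃ (g : (Fin N → ℝ) →ₗ[ℝ] ℝ) (b : ℝ),
    (∀ z : Fin N → ℝ, (∀ i, 0 < z i) → g z + b ≤ Φ z) ∧ v = g ξ + b} with hS
  -- the affine minorant adapted to ξ
  set g : (Fin N → ℝ) →ₗ[ℝ] ℝ :=
  { toFun := fun z => ∑ i, lam1 * Real.log (ξ i / cinf i) * z i,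
    map_add' := fun a b => by
      simp only [Pi.add_apply, mul_add]
      rw [Finset.sum_add_distrib],
    map_smul' := fun c a => by
      simp only [Pi.smul_apply, smul_eq_mul, RingHom.id_apply]
      rw [Finset.mul_sum]
      exact Finset.sum_congr rfl fun i _ => by ring } with hg
  set b : ℝ := lam1 * (∑ i, (cinf i - ξ i)) + lam2 * Ent ξ cinf with hb
  have hgval : ∀ z : Fin N → ℝ, g z = ∑ i, lam1 * Real.log (ξ i / cinf i) * z i :=
    fun z => rfl
  have hEntPsi : ∀ ζ : Fin N → ℝ, Ent ζ cinf = ∑ i, Psi (ζ i) (cinf i) := fun _ => rfl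
  have hcoord : ∀ (z : Fin N → ℝ), (∀ i, 0 < z i) → ∀ i,
      Psi (z i) (cinf i) - Real.log (ξ i / cinf i) * z i - (cinf i - ξ i) =
        Psi (z i) (ξ i) := by
    intro z hz i
    unfold Psi
    rw [Real.log_div (hz i).ne' (hcinf i).ne', Real.log_div (hξ i).ne' (hcinf i).ne',
      Real.log_div (hz i).ne' (hξ i).ne']
    ring
  have hid : ∀ (z : Fin N → ℝ), (∀ i, 0 < z i) →
      Ffun lam1 cinf z - (g z + lam1 * (∑ i, (cinf i - ξ i))) =
        lam1 * (∑ i, Psi (z i) (ξ i)) := by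
    intro z hz
    unfold Ffun
    rw [hgval]
    have h1 : ∑ i, lam1 * Real.log (ξ i / cinf i) * z i =
        lam1 * ∑ i, Real.log (ξ i / cinf i) * z i := by
      rw [Finset.mul_sum]
      exact Finset.sum_congr rfl fun i _ => by ring
    rw [h1, ← mul_add, ← mul_sub]
    congr 1
    rw [← Finset.sum_add_distrib, ← Finset.sum_sub_distrib]
    exact Finset.sum_congr rfl fun i _ => by have := hcoord z hz i; linarith
  -- minorant property
  have hmin : ∀ z : Fin N → ℝ, (∀ i, 0 < z i) → g z + b ≤ Φ z := by
    intro z hz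
    have hstar' := hstar ξ hξ hQξ hEntK hneq z hz
    have h2 := hid z hz
    have hGz : 0 ≤ Gfun y y' k cinf z := by
      unfold Gfun
      refine mul_nonneg (by norm_num) (Finset.sum_nonneg fun r _ => ?_)
      have hu : 0 < cpow z (y r) / cpow cinf (y r) :=
        div_pos (cpow_pos hz _) (cpow_pos hcinf _)
      have hv : 0 < cpow z (y' r) / cpow cinf (y' r) :=
        div_pos (cpow_pos hz _) (cpow_pos hcinf _)
      exact mul_nonneg (mul_nonneg (hk r).le (cpow_pos hcinf _).le) (psi_nonneg hu hv)
    rw [hΦ, hb]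
    have : g z + lam1 * (∑ i, (cinf i - ξ i)) =
        Ffun lam1 cinf z - lam1 * (∑ i, Psi (z i) (ξ i)) := by linarith
    simp only []
    linarith [hstar', hGz]
  -- value at ξ
  have hval : g ξ + b = Ffun lam1 cinf ξ + lam2 * Ent ξ cinf := by
    have h2 := hid ξ hξ
    have h3 : ∑ i, Psi (ξ i) (ξ i) = 0 := by
      refine Finset.sum_eq_zero fun i _ => ?_
      unfold Psi
      rw [div_self (hξ i).ne', Real.log_one]
      ring
    rw [hb]
    rw [h3] at h2
    rw [mul_zero] at h2
    linarith
  -- conclude via the supremum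
  have hmem : (g ξ + b) ∈ S := ⟨g, b, hmin, rfl⟩
  have hbdd : BddAbove S := by
    refine ⟨Φ ξ, fun w hw => ?_⟩
    obtain ⟨g', b', hmin', rfl⟩ := hw
    exact hmin' ξ hξ
  have hsup : g ξ + b ≤ sSup S := le_csSup hbdd hmem
  have hconv : convexification Φ ξ = sSup S := rfl
  rw [hconv]
  rw [hval] at hsup
  linarith


end Stmt9
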